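/- For an irreducible Markov chain on a finite state space with invariant measure π, the expected return time to a state x started from x equals π(V)/π(x), where π(V) is the total mass of π. -/
import Mathlib

set_option linter.unusedSectionVars false

open scoped BigOperators

attribute [local instance] Classical.propDecidable

noncomputable def kpow {V : Type*} [Fintype V] (P : V → V → ℝ) : ℕ → V → V → ℝ
  | 0 => fun x y => if x = y then (1 : ℝ) else 0
  | n + 1 => fun x y => ∑ z, kpow P n x z * P z y

noncomputable def taboo {V : Type*} [Fintype V] [DecidableEq V]
    (P : V → V → ℝ) (x : V) : ℕ → V → ℝ
  | 0 => fun y => P x y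
  | n + 1 => fun y => ∑ z, (if z = x then 0 else taboo P x n z) * P z y

noncomputable def chi {V : Type*} [DecidableEq V] (x z : V) : ℝ := if z = x then 0 else 1

section aux
variable {V : Type*} [Fintype V] [DecidableEq V]

lemma chi_mul (x z : V) (a : ℝ) : (if z = x then (0:ℝ) else a) = chi x z * a := by
  unfold chi; split <;> simp

lemma chi_nonneg (x z : V) : 0 ≤ chi x z := by unfold chi; split <;> norm_num

lemma chi_le_one (x z : V) : chi x z ≤ 1 := by unfold chi; split <;> norm_num

lemma chi_sum (x : V) (f : V → ℝ) : ∑ z, chi x z * f z = (∑ z, f z) - f x := by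
  have h : ∀ z, chi x z * f z = f z - (if z = x then f z else 0) := by
    intro z; unfold chi; split <;> simp
  simp only [h, Finset.sum_sub_distrib]
  congr 1
  simp

variable (P : V → V → ℝ) (x : V)

lemma kpow_nonneg (hPnn : ∀ x y, 0 ≤ P x y) : ∀ n z y, 0 ≤ kpow P n z y := by
  intro n
  induction n with
  | zero => intro z y; simp only [kpow]; split <;> norm_num
  | succ n ih => intro z y; simp only [kpow]; exact Finset.sum_nonneg fun w _ => mul_nonneg (ih z w) (hPnn w y)

lemma kpow_rowsum (hstoch : ∀ x, ∑ y, P x y = 1) : ∀ n z, ∑ y, kpow P n z y = 1 := by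
  intro n
  induction n with
  | zero =>
    intro z
    simp only [kpow]
    rw [Finset.sum_eq_single_of_mem z (Finset.mem_univ z)]
    · simp
    · intro b _ hb; rw [if_neg (by exact fun h => hb h.symm)]
  | succ n ih =>
    intro z
    simp only [kpow]
    rw [Finset.sum_comm]
    simp only [← Finset.mul_sum, hstoch, mul_one]
    exact ih z

lemma kpow_le_one (hPnn : ∀ x y, 0 ≤ P x y) (hstoch : ∀ x, ∑ y, P x y = 1)
    (n : ℕ) (z y : V) : kpow P n z y ≤ 1 := by
  rw [← kpow_rowsum P hstoch n z]
  exact Finset.single_le_sum (fun w _ => kpow_nonneg P hPnn n z w) (Finset.mem_univ y)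

lemma kpow_succ' : ∀ n (z y : V), kpow P (n+1) z y = ∑ w, P z w * kpow P n w y := by
  intro n
  induction n with
  | zero => intro z y; simp [kpow]
  | succ n ih =>
    intro z y
    calc kpow P (n+2) z y = ∑ w, kpow P (n+1) z w * P w y := by simp [kpow]
      _ = ∑ w, (∑ u, P z u * kpow P n u w) * P w y := by simp only [ih]
      _ = ∑ u, P z u * ∑ w, kpow P n u w * P w y := by
          simp only [Finset.sum_mul, Finset.mul_sum, mul_assoc]
          exact Finset.sum_comm
      _ = ∑ u, P z u * kpow P (n+1) u y := by simp [kpow]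

lemma taboo_succ (n : ℕ) (y : V) :
    taboo P x (n+1) y = ∑ z, chi x z * taboo P x n z * P z y := by
  simp only [taboo]
  refine Finset.sum_congr rfl fun z _ => ?_
  rw [chi_mul]

lemma taboo_nonneg (hPnn : ∀ x y, 0 ≤ P x y) : ∀ n y, 0 ≤ taboo P x n y := by
  intro n
  induction n with
  | zero => intro y; simp only [taboo]; exact hPnn x y
  | succ n ih =>
    intro y
    rw [taboo_succ]
    exact Finset.sum_nonneg fun z _ =>
      mul_nonneg (mul_nonneg (chi_nonneg x z) (ih z)) (hPnn z y)

noncomputable def tmass (n : ℕ) : ℝ := ∑ y, taboo P x n y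

lemma tmass_zero (hstoch : ∀ x, ∑ y, P x y = 1) : tmass P x 0 = 1 := by
  simp [tmass, taboo, hstoch]

lemma tmass_succ (hstoch : ∀ x, ∑ y, P x y = 1) (n : ℕ) :
    tmass P x (n+1) = ∑ z, chi x z * taboo P x n z := by
  unfold tmass
  simp only [taboo_succ]
  rw [Finset.sum_comm]
  simp [← Finset.mul_sum, hstoch]

lemma tmass_succ' (hstoch : ∀ x, ∑ y, P x y = 1) (n : ℕ) :
    tmass P x (n+1) = tmass P x n - taboo P x n x := by
  rw [tmass_succ P x hstoch, chi_sum]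
  rfl

lemma tmass_nonneg (hPnn : ∀ x y, 0 ≤ P x y) (n : ℕ) : 0 ≤ tmass P x n :=
  Finset.sum_nonneg fun y _ => taboo_nonneg P x hPnn n y

lemma taboo_le_tmass (hPnn : ∀ x y, 0 ≤ P x y) (n : ℕ) (y : V) :
    taboo P x n y ≤ tmass P x n :=
  Finset.single_le_sum (fun z _ => taboo_nonneg P x hPnn n z) (Finset.mem_univ y)

lemma tmass_antitone (hPnn : ∀ x y, 0 ≤ P x y) (hstoch : ∀ x, ∑ y, P x y = 1) :
    ∀ {m n : ℕ}, m ≤ n → tmass P x n ≤ tmass P x m := by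
  have h : ∀ n, tmass P x (n+1) ≤ tmass P x n := by
    intro n
    rw [tmass_succ' P x hstoch]
    have := taboo_nonneg P x hPnn n x
    linarith
  intro m n hmn
  induction hmn with
  | refl => exact le_refl _
  | step _ ih => exact le_trans (h _) ih

lemma tmass_le_one (hPnn : ∀ x y, 0 ≤ P x y) (hstoch : ∀ x, ∑ y, P x y = 1) (n : ℕ) :
    tmass P x n ≤ 1 := by
  have := tmass_antitone P x hPnn hstoch (Nat.zero_le n)
  rwa [tmass_zero P x hstoch] at this

lemma sum_range_taboo (hstoch : ∀ x, ∑ y, P x y = 1) (n : ℕ) :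
    ∑ k ∈ Finset.range n, taboo P x k x = 1 - tmass P x n := by
  induction n with
  | zero => simp [tmass_zero P x hstoch]
  | succ n ih =>
    rw [Finset.sum_range_succ, ih, tmass_succ' P x hstoch]
    ring

end aux
section aux2
variable {V : Type*} [Fintype V] [DecidableEq V]

noncomputable def gfun (P : V → V → ℝ) (x : V) : ℕ → V → ℝ
  | 0 => fun _ => 1
  | n + 1 => fun z => ∑ y, chi x y * (P z y * gfun P x n y)

variable (P : V → V → ℝ) (x : V)

lemma gfun_nonneg (hPnn : ∀ x y, 0 ≤ P x y) : ∀ n z, 0 ≤ gfun P x n z := by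
  intro n
  induction n with
  | zero => intro z; simp [gfun]
  | succ n ih =>
    intro z
    simp only [gfun]
    exact Finset.sum_nonneg fun y _ =>
      mul_nonneg (chi_nonneg x y) (mul_nonneg (hPnn z y) (ih y))

lemma gfun_le_one (hPnn : ∀ x y, 0 ≤ P x y) (hstoch : ∀ x, ∑ y, P x y = 1) :
    ∀ n z, gfun P x n z ≤ 1 := by
  intro n
  induction n with
  | zero => intro z; simp [gfun]
  | succ n ih =>
    intro z
    simp only [gfun]
    calc ∑ y, chi x y * (P z y * gfun P x n y) ≤ ∑ y, P z y := by
          refine Finset.sum_le_sum fun y _ => ?_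
          have h1 : chi x y * (P z y * gfun P x n y) ≤ 1 * (P z y * 1) := by
            refine mul_le_mul (chi_le_one x y) ?_ ?_ zero_le_one
            · exact mul_le_mul_of_nonneg_left (ih y) (hPnn z y)
            · exact mul_nonneg (hPnn z y) (gfun_nonneg P x hPnn n y)
          simpa using h1
      _ = 1 := hstoch z

lemma gfun_succ_le (hPnn : ∀ x y, 0 ≤ P x y) (hstoch : ∀ x, ∑ y, P x y = 1) :
    ∀ n z, gfun P x (n+1) z ≤ gfun P x n z := by
  intro n
  induction n with
  | zero => intro z; exact gfun_le_one P x hPnn hstoch 1 z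
  | succ n ih =>
    intro z
    simp only [gfun]
    refine Finset.sum_le_sum fun y _ => ?_
    exact mul_le_mul_of_nonneg_left
      (mul_le_mul_of_nonneg_left (ih y) (hPnn z y)) (chi_nonneg x y)

lemma gfun_mono (hPnn : ∀ x y, 0 ≤ P x y) (hstoch : ∀ x, ∑ y, P x y = 1)
    {m n : ℕ} (h : m ≤ n) (z : V) : gfun P x n z ≤ gfun P x m z := by
  induction h with
  | refl => exact le_refl _
  | step _ ih => exact le_trans (gfun_succ_le P x hPnn hstoch _ z) ih

lemma gfun_add_kpow (hPnn : ∀ x y, 0 ≤ P x y) (hstoch : ∀ x, ∑ y, P x y = 1) :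
    ∀ n z, z ≠ x → gfun P x n z + kpow P n z x ≤ 1 := by
  intro n
  induction n with
  | zero =>
    intro z hz
    simp only [gfun, kpow]
    rw [if_neg hz]
    norm_num
  | succ n ih =>
    intro z _
    rw [kpow_succ']
    simp only [gfun]
    rw [← Finset.sum_add_distrib]
    calc ∑ y, (chi x y * (P z y * gfun P x n y) + P z y * kpow P n y x)
        ≤ ∑ y, P z y := by
          refine Finset.sum_le_sum fun y _ => ?_
          by_cases hy : y = x
          · have h1 : chi x y = 0 := by unfold chi; rw [if_pos hy]
            rw [h1]
            have := kpow_le_one P hPnn hstoch n y x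
            have := hPnn z y
            nlinarith
          · have h1 : chi x y = 1 := by unfold chi; rw [if_neg hy]
            rw [h1, one_mul, ← mul_add]
            have h2 := ih y hy
            have := hPnn z y
            nlinarith
      _ = 1 := hstoch z

lemma tmass_key (hstoch : ∀ x, ∑ y, P x y = 1) :
    ∀ m n, tmass P x (n + m + 1) = ∑ z, chi x z * taboo P x n z * gfun P x m z := by
  intro m
  induction m with
  | zero =>
    intro n
    rw [tmass_succ P x hstoch]
    simp [gfun]
  | succ m ih =>
    intro n
    have harith : n + (m + 1) + 1 = (n + 1) + m + 1 := by omega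
    rw [harith, ih (n+1)]
    have hrhs : ∀ z, chi x z * taboo P x (n+1) z * gfun P x m z
        = ∑ w, chi x w * taboo P x n w * (chi x z * (P w z * gfun P x m z)) := by
      intro z
      rw [taboo_succ]
      simp only [Finset.sum_mul, Finset.mul_sum]
      refine Finset.sum_congr rfl fun w _ => ?_
      ring
    calc ∑ z, chi x z * taboo P x (n+1) z * gfun P x m z
        = ∑ z, ∑ w, chi x w * taboo P x n w * (chi x z * (P w z * gfun P x m z)) := by
          exact Finset.sum_congr rfl fun z _ => hrhs z
      _ = ∑ w, ∑ z, chi x w * taboo P x n w * (chi x z * (P w z * gfun P x m z)) :=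
          Finset.sum_comm
      _ = ∑ w, chi x w * taboo P x n w * gfun P x (m+1) w := by
          refine Finset.sum_congr rfl fun w _ => ?_
          rw [← Finset.mul_sum]
          rfl

end aux2
section aux3
variable {V : Type*} [Fintype V] [DecidableEq V] [Nonempty V]
variable (P : V → V → ℝ) (x : V)

lemma tmass_decay (hPnn : ∀ x y, 0 ≤ P x y) (hstoch : ∀ x, ∑ y, P x y = 1)
    (hirr : ∀ x y, ∃ n : ℕ, 0 < kpow P n x y) :
    ∃ M c, 0 < M ∧ 0 < c ∧ c < 1 ∧ ∀ n, tmass P x (n + M) ≤ c * tmass P x n := by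
  -- choose for each z a time with positive kernel to x
  have hch : ∀ z : V, ∃ n : ℕ, 0 < kpow P n z x := fun z => hirr z x
  choose nz hnz using hch
  set N : ℕ := Finset.univ.sup nz with hN
  have hgN : ∀ z : V, z ≠ x → gfun P x N z < 1 := by
    intro z hz
    have h1 : gfun P x N z ≤ gfun P x (nz z) z :=
      gfun_mono P x hPnn hstoch (Finset.le_sup (Finset.mem_univ z)) z
    have h2 := gfun_add_kpow P x hPnn hstoch (nz z) z hz
    have h3 := hnz z
    linarith
  set c : ℝ := max (1/2) (Finset.univ.sup' Finset.univ_nonempty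
      (fun z => if z = x then 0 else gfun P x N z)) with hcdef
  have hc0 : 0 < c := lt_of_lt_of_le (by norm_num) (le_max_left _ _)
  have hc1 : c < 1 := by
    apply max_lt (by norm_num)
    rw [Finset.sup'_lt_iff]
    intro z _
    by_cases hz : z = x
    · rw [if_pos hz]; norm_num
    · rw [if_neg hz]; exact hgN z hz
  have hcle : ∀ z : V, z ≠ x → gfun P x N z ≤ c := by
    intro z hz
    refine le_trans ?_ (le_max_right _ _)
    have := Finset.le_sup' (fun z => if z = x then 0 else gfun P x N z)
      (Finset.mem_univ z)
    rwa [if_neg hz] at this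
  refine ⟨N + 1, c, Nat.succ_pos N, hc0, hc1, fun n => ?_⟩
  have hk := tmass_key P x hstoch N n
  have harith : n + (N + 1) = n + N + 1 := by omega
  rw [harith, hk]
  have hle : ∑ z, chi x z * taboo P x n z * gfun P x N z
      ≤ ∑ z, chi x z * taboo P x n z * c := by
    refine Finset.sum_le_sum fun z _ => ?_
    by_cases hz : z = x
    · have h1 : chi x z = 0 := by unfold chi; rw [if_pos hz]
      simp [h1]
    · exact mul_le_mul_of_nonneg_left (hcle z hz)
        (mul_nonneg (chi_nonneg x z) (taboo_nonneg P x hPnn n z))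
  refine le_trans hle ?_
  rw [← Finset.sum_mul, mul_comm]
  apply mul_le_mul_of_nonneg_left _ hc0.le
  rw [chi_sum]
  have h1 : tmass P x (n+1) = (∑ z, taboo P x n z) - taboo P x n x := by
    rw [tmass_succ' P x hstoch]; rfl
  rw [← h1]
  exact tmass_antitone P x hPnn hstoch (Nat.le_succ n)

lemma tmass_pow (hPnn : ∀ x y, 0 ≤ P x y) (hstoch : ∀ x, ∑ y, P x y = 1)
    {M : ℕ} {c : ℝ} (hM : 0 < M) (hc0 : 0 < c)
    (hdec : ∀ n, tmass P x (n + M) ≤ c * tmass P x n) :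
    ∀ n, tmass P x n ≤ c ^ (n / M) := by
  intro n
  induction n using Nat.strong_induction_on with
  | _ n ih =>
    by_cases h : n < M
    · rw [Nat.div_eq_of_lt h, pow_zero]
      exact tmass_le_one P x hPnn hstoch n
    · push_neg at h
      have h1 : n = (n - M) + M := by omega
      have h2 : n / M = (n - M) / M + 1 := by
        rw [Nat.div_eq_sub_div hM h]
      have h3 : tmass P x n ≤ c * tmass P x (n - M) := by
        have := hdec (n - M); rwa [← h1] at this
      have h4 : tmass P x (n - M) ≤ c ^ ((n - M) / M) := ih (n - M) (by omega)
      calc tmass P x n ≤ c * c ^ ((n - M) / M) :=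
            le_trans h3 (mul_le_mul_of_nonneg_left h4 hc0.le)
        _ = c ^ (n / M) := by rw [h2, pow_succ]; ring

lemma kpow_invariant (f : V → ℝ) (hf : ∀ y, ∑ z, f z * P z y = f y) :
    ∀ n y, ∑ z, f z * kpow P n z y = f y := by
  intro n
  induction n with
  | zero =>
    intro y
    simp only [kpow]
    rw [Finset.sum_eq_single_of_mem y (Finset.mem_univ y)]
    · rw [if_pos rfl, mul_one]
    · intro b _ hb; rw [if_neg hb, mul_zero]
  | succ n ih =>
    intro y
    simp only [kpow]
    calc ∑ z, f z * ∑ w, kpow P n z w * P w y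
        = ∑ w, (∑ z, f z * kpow P n z w) * P w y := by
          simp only [Finset.mul_sum, Finset.sum_mul]
          rw [Finset.sum_comm]
          exact Finset.sum_congr rfl fun w _ => Finset.sum_congr rfl fun z _ => by ring
      _ = ∑ w, f w * P w y := by
          exact Finset.sum_congr rfl fun w _ => by rw [ih w]
      _ = f y := hf y

lemma invariant_unique (π : V → ℝ)
    (hPnn : ∀ x y, 0 ≤ P x y) (hπpos : ∀ x, 0 < π x)
    (hinv : ∀ y, ∑ z, π z * P z y = π y)
    (hirr : ∀ x y, ∃ n : ℕ, 0 < kpow P n x y)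
    (μ : V → ℝ) (hμnn : ∀ z, 0 ≤ μ z)
    (hμinv : ∀ y, ∑ z, μ z * P z y = μ y) (hμx : μ x = 1) :
    ∀ z, π x * μ z = π z := by
  set c : ℝ := Finset.univ.inf' Finset.univ_nonempty (fun z => π x * μ z / π z) with hcdef
  set ν : V → ℝ := fun z => π x * μ z - c * π z with hνdef
  have hνnn : ∀ z, 0 ≤ ν z := by
    intro z
    have h1 : c ≤ π x * μ z / π z := Finset.inf'_le _ (Finset.mem_univ z)
    have h2 := (le_div_iff₀ (hπpos z)).mp h1
    simp only [hνdef]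
    linarith
  obtain ⟨z₀, _, hz₀⟩ := Finset.exists_mem_eq_inf' (Finset.univ_nonempty)
      (fun z => π x * μ z / π z)
  have hνz₀ : ν z₀ = 0 := by
    simp only [hνdef, hcdef, hz₀]
    rw [div_mul_cancel₀ _ (hπpos z₀).ne', sub_self]
  have hνinv : ∀ y, ∑ z, ν z * P z y = ν y := by
    intro y
    have h1 : ∑ z, ν z * P z y = (π x) * (∑ z, μ z * P z y) - c * (∑ z, π z * P z y) := by
      simp only [hνdef, sub_mul, Finset.sum_sub_distrib, Finset.mul_sum]
      congr 1
      · exact Finset.sum_congr rfl fun z _ => by ring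
      · exact Finset.sum_congr rfl fun z _ => by ring
    rw [h1, hμinv y, hinv y]
  have hνk := kpow_invariant P ν hνinv
  have hν0 : ∀ z, ν z = 0 := by
    intro z
    obtain ⟨n, hn⟩ := hirr z z₀
    have h1 : ν z * kpow P n z z₀ ≤ ∑ w, ν w * kpow P n w z₀ :=
      Finset.single_le_sum
        (fun w _ => mul_nonneg (hνnn w) (kpow_nonneg P hPnn n w z₀)) (Finset.mem_univ z)
    rw [hνk n z₀, hνz₀] at h1
    have h2 := hνnn z
    nlinarith
  have hc1 : c = 1 := by
    have := hν0 x
    simp only [hνdef, hμx, mul_one] at this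
    have hπx := (hπpos x).ne'
    have : π x * (1 - c) = 0 := by linarith
    rcases mul_eq_zero.mp this with h | h
    · exact absurd h hπx
    · linarith
  intro z
  have := hν0 z
  simp only [hνdef, hc1, one_mul] at this
  linarith

end aux3
lemma pow_div_le_geom {M : ℕ} {c : ℝ} (hM : 0 < M) (hc0 : 0 < c) (hc1 : c < 1) (n : ℕ) :
    c ^ (n / M) ≤ (c ^ ((1:ℝ)/M)) ^ n / c := by
  have hMpos : (0:ℝ) < M := by exact_mod_cast hM
  have hr : (c ^ ((1:ℝ)/M)) ^ n = c ^ ((n:ℝ)/M) := by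
    rw [← Real.rpow_natCast (c ^ ((1:ℝ)/M)) n, ← Real.rpow_mul hc0.le]
    congr 1
    field_simp
  have hl : (c : ℝ) ^ (n / M) = c ^ (((n / M : ℕ) : ℝ)) := by
    rw [Real.rpow_natCast]
  have hdiv : (c ^ ((1:ℝ)/M)) ^ n / c = c ^ ((n:ℝ)/M - 1) := by
    rw [hr, Real.rpow_sub hc0, Real.rpow_one]
  rw [hl, hdiv]
  apply Real.rpow_le_rpow_of_exponent_ge hc0 hc1.le
  have hdm : M * (n / M) + n % M = n := Nat.div_add_mod n M
  have hmod : n % M < M := Nat.mod_lt n hM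
  have h0 : n < M * (n / M) + M := by omega
  have h0' : (n:ℝ) < (M:ℝ) * ((n / M : ℕ) : ℝ) + M := by exact_mod_cast h0
  rw [sub_le_iff_le_add, div_le_iff₀ hMpos]
  nlinarith

lemma tsum_mul_eq_tsum_tail (a t : ℕ → ℝ) (hnn : ∀ n, 0 ≤ a n) (hsum : Summable a)
    (hsum' : Summable fun n : ℕ => ((n:ℝ)+1) * a n)
    (htsum : Summable t) (htnn : ∀ n, 0 ≤ t n)
    (htail : ∀ n, ∑' k : ℕ, a (k + n) = t n) :
    ∑' n : ℕ, ((n:ℝ)+1) * a n = ∑' n : ℕ, t n := by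
  set A : ℕ → ENNReal := fun n => ENNReal.ofReal (a n) with hA
  have step1 : ∀ n : ℕ, ENNReal.ofReal (t n) = ∑' k : ℕ, A (k + n) := by
    intro n
    rw [← htail n, ENNReal.ofReal_tsum_of_nonneg (fun k => hnn _)
      ((summable_nat_add_iff n).mpr hsum)]
  have step2 : ∀ n : ℕ, (∑' k : ℕ, A (k + n)) = ∑' m : ℕ, (if n ≤ m then A m else 0) := by
    intro n
    have hinj : Function.Injective (fun k : ℕ => k + n) := add_left_injective n
    have hsupp : Function.support (fun m => if n ≤ m then A m else 0)
        ⊆ Set.range (fun k : ℕ => k + n) := by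
      intro m hm
      by_cases h : n ≤ m
      · exact ⟨m - n, by show m - n + n = m; omega⟩
      · rw [Function.mem_support, if_neg h] at hm
        exact absurd rfl hm
    have h2 := hinj.tsum_eq hsupp
    rw [← h2]
    exact tsum_congr fun k => by rw [if_pos (by omega)]
  have step3 : (∑' (n : ℕ) (m : ℕ), (if n ≤ m then A m else 0))
      = ∑' m : ℕ, (((m : ℕ) : ENNReal) + 1) * A m := by
    rw [ENNReal.tsum_comm]
    refine tsum_congr fun m => ?_
    rw [tsum_eq_sum (s := Finset.range (m+1))
      (fun n hn => if_neg (fun h => hn (Finset.mem_range.mpr (by omega))))]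
    rw [Finset.sum_congr rfl (fun n hn => if_pos (by
      have := Finset.mem_range.mp hn; omega))]
    rw [Finset.sum_const, Finset.card_range, nsmul_eq_mul]
    push_cast
    ring
  have hL : ENNReal.ofReal (∑' n : ℕ, ((n:ℝ)+1) * a n)
      = ∑' n : ℕ, (((n : ℕ) : ENNReal) + 1) * A n := by
    rw [ENNReal.ofReal_tsum_of_nonneg (fun n => mul_nonneg (by positivity) (hnn n)) hsum']
    refine tsum_congr fun n => ?_
    rw [ENNReal.ofReal_mul (by positivity)]
    congr 1
    rw [show ((n:ℝ)+1) = (((n+1 : ℕ)) : ℝ) by push_cast; ring, ENNReal.ofReal_natCast]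
    push_cast
    ring
  have hR : ENNReal.ofReal (∑' n : ℕ, t n) = ∑' n : ℕ, ENNReal.ofReal (t n) :=
    ENNReal.ofReal_tsum_of_nonneg htnn htsum
  have key : ENNReal.ofReal (∑' n : ℕ, ((n:ℝ)+1) * a n) = ENNReal.ofReal (∑' n : ℕ, t n) := by
    rw [hL, hR, ← step3]
    calc (∑' (n : ℕ) (m : ℕ), (if n ≤ m then A m else 0))
        = ∑' n : ℕ, ∑' k : ℕ, A (k + n) := tsum_congr fun n => (step2 n).symm
      _ = ∑' n : ℕ, ENNReal.ofReal (t n) := tsum_congr fun n => (step1 n).symm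
  exact (ENNReal.ofReal_eq_ofReal_iff
    (tsum_nonneg fun n => mul_nonneg (by positivity) (hnn n))
    (tsum_nonneg htnn)).mp key
set_option maxHeartbeats 2000000 in
/-- For an irreducible Markov chain on a finite state space with invariant measure `π`,
the expected return time to `x` equals `π(V)/π(x)`. -/
theorem stmt2 {V : Type*} [Fintype V] [DecidableEq V] [Nonempty V]
    (P : V → V → ℝ) (π : V → ℝ)
    (hPnn : ∀ x y, 0 ≤ P x y) (hstoch : ∀ x, ∑ y, P x y = 1)
    (hπpos : ∀ x, 0 < π x)
    (hinv : ∀ y, ∑ z, π z * P z y = π y)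
    (hirr : ∀ x y, ∃ n : ℕ, 0 < kpow P n x y)
    (x : V) :
    ∑' n : ℕ, ((n : ℝ) + 1) * taboo P x n x = (∑ y, π y) / π x := by
  have hta : ∀ n y, 0 ≤ taboo P x n y := taboo_nonneg P x hPnn
  have htnn : ∀ n, 0 ≤ tmass P x n := tmass_nonneg P x hPnn
  obtain ⟨M, c, hM, hc0, hc1, hdec⟩ := tmass_decay P x hPnn hstoch hirr
  have hpow := tmass_pow P x hPnn hstoch hM hc0 hdec
  set r : ℝ := c ^ ((1:ℝ)/M) with hrdef
  have hr0 : 0 < r := Real.rpow_pos_of_pos hc0 _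
  have hr1 : r < 1 := Real.rpow_lt_one hc0.le hc1 (by positivity)
  have hb : ∀ n, tmass P x n ≤ r ^ n / c := fun n =>
    le_trans (hpow n) (pow_div_le_geom hM hc0 hc1 n)
  have hsumgeom : Summable (fun n : ℕ => r ^ n / c) :=
    (summable_geometric_of_lt_one hr0.le hr1).div_const c
  have hsum_t : Summable (tmass P x) := Summable.of_nonneg_of_le htnn hb hsumgeom
  have hsum_ty : ∀ y, Summable (fun n => taboo P x n y) := fun y =>
    Summable.of_nonneg_of_le (fun n => hta n y) (fun n => taboo_le_tmass P x hPnn n y) hsum_t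
  have hsum_a : Summable (fun n => taboo P x n x) := hsum_ty x
  have hsum_nt : Summable (fun n : ℕ => ((n:ℝ)+1) * (r ^ n / c)) := by
    have ha := summable_pow_mul_geometric_of_norm_lt_one (R := ℝ) 1 (r := r)
      (by rw [Real.norm_eq_abs, abs_of_pos hr0]; exact hr1)
    have hb' := summable_geometric_of_lt_one hr0.le hr1
    refine ((ha.add hb').div_const c).congr fun n => ?_
    push_cast
    ring
  have hsum_na : Summable (fun n : ℕ => ((n:ℝ)+1) * taboo P x n x) := by
    refine Summable.of_nonneg_of_le
      (fun n => mul_nonneg (by positivity) (hta n x)) (fun n => ?_) hsum_nt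
    exact mul_le_mul_of_nonneg_left
      (le_trans (taboo_le_tmass P x hPnn n x) (hb n)) (by positivity)
  have ht0 : Filter.Tendsto (tmass P x) Filter.atTop (nhds 0) := by
    refine squeeze_zero htnn hb ?_
    have := (tendsto_pow_atTop_nhds_zero_of_lt_one hr0.le hr1).div_const c
    simpa using this
  have hA1 : ∑' n : ℕ, taboo P x n x = 1 := by
    have h1 := hsum_a.hasSum.tendsto_sum_nat
    have h2 : Filter.Tendsto (fun n => ∑ i ∈ Finset.range n, taboo P x i x)
        Filter.atTop (nhds 1) := by
      have h3 := Filter.Tendsto.const_sub (1:ℝ) ht0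
      simp only [sub_zero] at h3
      refine h3.congr fun n => ?_
      rw [sum_range_taboo P x hstoch n]
    exact tendsto_nhds_unique h1 h2
  have htail : ∀ n, ∑' k : ℕ, taboo P x (k + n) x = tmass P x n := by
    intro n
    have h1 := Summable.sum_add_tsum_nat_add (f := fun k => taboo P x k x) n hsum_a
    rw [hA1, sum_range_taboo P x hstoch n] at h1
    linarith
  have hE : ∑' n : ℕ, ((n:ℝ)+1) * taboo P x n x = ∑' n, tmass P x n :=
    tsum_mul_eq_tsum_tail _ _ (fun n => hta n x) hsum_a hsum_na hsum_t htnn htail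
  set μ : V → ℝ := fun y => ∑' n : ℕ, taboo P x n y with hμdef
  have hμnn : ∀ z, 0 ≤ μ z := fun z => tsum_nonneg (fun n => hta n z)
  have hμx : μ x = 1 := hA1
  have hstep : ∀ (n : ℕ) (y : V), ∑ z, taboo P x n z * P z y
      = taboo P x (n+1) y + taboo P x n x * P x y := by
    intro n y
    rw [taboo_succ]
    have h1 := chi_sum x (fun z => taboo P x n z * P z y)
    have h2 : ∑ z, chi x z * taboo P x n z * P z y
        = ∑ z, chi x z * (taboo P x n z * P z y) :=
      Finset.sum_congr rfl fun z _ => by ring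
    rw [h2, h1]
    ring
  have hμinv : ∀ y, ∑ z, μ z * P z y = μ y := by
    intro y
    calc ∑ z, μ z * P z y = ∑ z, ∑' n : ℕ, taboo P x n z * P z y :=
          Finset.sum_congr rfl fun z _ => (tsum_mul_right).symm
      _ = ∑' n : ℕ, ∑ z, taboo P x n z * P z y :=
          (Summable.tsum_finsetSum (fun z _ => (hsum_ty z).mul_right _)).symm
      _ = ∑' n : ℕ, (taboo P x (n+1) y + taboo P x n x * P x y) :=
          tsum_congr fun n => hstep n y
      _ = (∑' n : ℕ, taboo P x (n+1) y) + (∑' n : ℕ, taboo P x n x * P x y) := by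
          refine Summable.tsum_add ?_ ?_
          · exact (summable_nat_add_iff 1).mpr (hsum_ty y)
          · exact hsum_a.mul_right _
      _ = (μ y - taboo P x 0 y) + 1 * P x y := by
          congr 1
          · have h4 := Summable.tsum_eq_zero_add (hsum_ty y)
            linarith [h4]
          · rw [tsum_mul_right, hA1]
      _ = μ y := by
          have h5 : taboo P x 0 y = P x y := by simp [taboo]
          rw [h5]; ring
  have huniq := invariant_unique P x π hPnn hπpos hinv hirr μ hμnn hμinv hμx
  have hμeq : ∀ z, μ z = π z / π x := by
    intro z
    rw [eq_div_iff (hπpos x).ne']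
    linarith [huniq z]
  calc ∑' n : ℕ, ((n:ℝ)+1) * taboo P x n x = ∑' n, tmass P x n := hE
    _ = ∑ y, μ y := by
        have h6 := Summable.tsum_finsetSum (f := fun (y : V) (n : ℕ) => taboo P x n y)
          (s := Finset.univ) (fun y _ => hsum_ty y)
        exact h6
    _ = ∑ y, π y / π x := Finset.sum_congr rfl fun y _ => hμeq y
    _ = (∑ y, π y) / π x := by rw [Finset.sum_div]
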